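/- Let Θ be a DTAS which self-assembles the pattern Q using at most m_b black tile types and m_g gray tile types. Then a white tile type of Θ which is used in one of the positions A, B₁, B₂, C₁, C₂, D₁ or D₂ of some supertile cannot be used in any other of these positions in any supertile. -/

import Mathlib

/-!
The black tile type is unique, so its glues satisfy `north = south = blackN` and
`east = west = blackE`, and by directedness no other tile type has the inputs
`(blackN, blackE)`. Between black rows, the middle gadget row is a deterministic counter whose
only white tile sits at index `k`; hence its tiles with indices `≤ k + 1` are pairwise
distinct, and likewise for the gadget column. These `2k + 2` gray counter tiles leave room for a
single further gray tile type. Chasing glues around the corner of a supertile shows that this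
extra tile is the tile in every supertile corner, that both counters saturate at index `k + 1`,
and that the gray top row of each supertile runs through the gadget row counter, ending with
`gadgetRow k` at `D₂` (similarly for the right column and `D₁`).

Reading off input glues: a white tile at `B₁` or `D₂` has south glue `blackN`, at `C₁` the
saturated glue `satV`; at `B₂` or `D₁` its west glue is `blackE`, at `C₂` it is `satH`. Each
combination of such a south and such a west glue belongs to the black tile, a saturated counter
tile or the corner tile, none of them white. The remaining pairs are separated by the white
neighbours of `A` and `B₁`. Everything is symmetric under reflection in the main diagonal, which
exchanges `B₁ ↔ B₂`, `C₁ ↔ C₂`, `D₁ ↔ D₂`; facts about columns are obtained from facts about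
rows by applying them to the reflected assembly.
-/

/-- A colored Wang tile with a color and four glues (north, east, south, west). -/
structure Tile (C G : Type) where
  color : C
  north : G
  east : G
  south : G
  west : G
deriving DecidableEq

/-- A rectilinear tile assembly system: a finite set of tile types together with
an L-shaped seed, given by its north glues (bottom arm) and east glues (left arm). -/
structure RTAS (C G : Type) where
  tiles : Finset (Tile C G)
  seedN : ℕ → G
  seedE : ℕ → G

/-- A tile assignment for the `M × N` rectangle spanned by the seed:
every tile belongs to the system, west/south glues match the east/north glues of the
west/south neighbours, and the seed glues on the boundary. -/
def IsAssignment {C G : Type} (T : RTAS C G) (M N : ℕ) (f : ℕ → ℕ → Tile C G) : Prop :=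
  (∀ x < M, ∀ y < N, f x y ∈ T.tiles) ∧
  (∀ y < N, (f 0 y).west = T.seedE y) ∧
  (∀ x < M, (f x 0).south = T.seedN x) ∧
  (∀ x, x + 1 < M → ∀ y < N, (f (x + 1) y).west = (f x y).east) ∧
  (∀ x < M, ∀ y, y + 1 < N → (f x (y + 1)).south = (f x y).north)

/-- `T` self-assembles the `M × N` pattern `P` if some tile assignment realizes `P`. -/
def SelfAssembles {C G : Type} (T : RTAS C G) (M N : ℕ) (P : ℕ → ℕ → C) : Prop :=
  ∃ f, IsAssignment T M N f ∧ ∀ x < M, ∀ y < N, (f x y).color = P x y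

/-- A directed RTAS: distinct tile types differ in their south or west glue. -/
def DirectedTAS {C G : Type} (T : RTAS C G) : Prop :=
  ∀ t₁ ∈ T.tiles, ∀ t₂ ∈ T.tiles, t₁ ≠ t₂ → t₁.south ≠ t₂.south ∨ t₁.west ≠ t₂.west

/-- The set of colors occurring in the `M × N` pattern `P`. -/
def colorsOf {C : Type} [DecidableEq C] (M N : ℕ) (P : ℕ → ℕ → C) : Finset C :=
  (Finset.range M ×ˢ Finset.range N).image fun q => P q.1 q.2

/-- The named colors used in the subpatterns of the pattern `P_F` of the paper.
`uniq n` are the "unique" filler colors. -/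
inductive PColor where
  | orC | plus | minus
  | Z1 | Z2 | Z3 | Z4
  | aC | bW | bD | cW | cD | dC
  | arrW (w : Fin 2)
  | arrD (w : Fin 2)
  | upW (s : Fin 2)
  | upD (s : Fin 2)
  | gate (i : Fin 4)
  | X (i : Fin 8)
  | Y (i : Fin 8)
  | varW (v : ℕ)
  | negW (v : ℕ)
  | varAux (v : ℕ)
  | varMod (v : ℕ)
  | varModd (v : ℕ)
  | uniq (n : ℕ)
deriving DecidableEq

/-- The `16 × 2` subpattern `p`: eight `2 × 2` blocks, block `i` having colors
`Xᵢ` (bottom-left), `OR` (bottom-right, top-left) and `Yᵢ` (top-right). -/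
def pPat : ℕ → ℕ → PColor := fun x y =>
  if y = 0 then
    if x % 2 = 0 then PColor.X ⟨x / 2 % 8, Nat.mod_lt _ (by norm_num)⟩ else PColor.orC
  else
    if x % 2 = 0 then PColor.orC else PColor.Y ⟨x / 2 % 8, Nat.mod_lt _ (by norm_num)⟩

/-- The `4 × 4` subpatterns `q₁, …, q₄` (index `idx = 0, …, 3`), with west input
`w = idx / 2` and south input `s = idx % 2` feeding an `OR`-colored position. -/
def qPat (idx : Fin 4) : ℕ → ℕ → PColor := fun x y =>
  let wv : Fin 2 := ⟨idx.val / 2, by have := idx.isLt; omega⟩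
  let sv : Fin 2 := ⟨idx.val % 2, Nat.mod_lt _ (by norm_num)⟩
  match x, y with
  | 0, 0 => PColor.Z1
  | 1, 0 => PColor.Z2
  | 2, 0 => PColor.upD sv
  | 3, 0 => PColor.bD
  | 0, 1 => PColor.Z3
  | 1, 1 => PColor.aC
  | 2, 1 => PColor.upW sv
  | 3, 1 => PColor.bW
  | 0, 2 => PColor.arrD wv
  | 1, 2 => PColor.arrW wv
  | 2, 2 => PColor.orC
  | 3, 2 => if idx.val = 0 then PColor.minus else PColor.plus
  | 0, 3 => PColor.cD
  | 1, 3 => PColor.cW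
  | 2, 3 => PColor.gate idx
  | _, _ => PColor.dC

/-- The `6 × 3` subpattern `q₅`: bottom row `a ↑₀ ↑₁ ↑₀ ↑₁ b`, middle row
`→₀ OR OR OR OR +`, top row `c A B C D d`. -/
def q5Pat : ℕ → ℕ → PColor := fun x y =>
  match y, x with
  | 0, 0 => PColor.aC
  | 0, 1 => PColor.upW 0
  | 0, 2 => PColor.upW 1
  | 0, 3 => PColor.upW 0
  | 0, 4 => PColor.upW 1
  | 0, _ => PColor.bW
  | 1, 0 => PColor.arrW 0
  | 1, 5 => PColor.plus
  | 1, _ => PColor.orC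
  | 2, 0 => PColor.cW
  | 2, 1 => PColor.gate 0
  | 2, 2 => PColor.gate 1
  | 2, 3 => PColor.gate 2
  | 2, 4 => PColor.gate 3
  | _, _ => PColor.dC

/-- A literal: a variable index together with its sign (`true` = positive). -/
abbrev Lit := ℕ × Bool

/-- A clause with three literals. -/
abbrev Clause3 := Lit × Lit × Lit

/-- A boolean formula in 3-CNF over the variables `0, …, numVars - 1`. -/
structure CNF3 where
  numVars : ℕ
  clauses : List Clause3
  wf : ∀ cl ∈ clauses, cl.1.1 < numVars ∧ cl.2.1.1 < numVars ∧ cl.2.2.1 < numVars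

/-- Value of a literal under a variable assignment. -/
def litVal (f : ℕ → Bool) (l : Lit) : Bool := if l.2 then f l.1 else ! f l.1

/-- A 3-CNF formula is satisfiable if some assignment makes every clause true. -/
def CNF3.Satisfiable (F : CNF3) : Prop :=
  ∃ f : ℕ → Bool, ∀ cl ∈ F.clauses,
    (litVal f cl.1 || litVal f cl.2.1 || litVal f cl.2.2) = true

/-- The `2 × 2` subpattern `r₁(v)`. -/
def r1Pat (v : ℕ) : ℕ → ℕ → PColor := fun x y =>
  match x, y with
  | 0, 0 => PColor.Z4
  | 1, 0 => PColor.varW v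
  | 0, 1 => PColor.varAux v
  | _, _ => PColor.varMod v

/-- The `2 × 2` subpattern `r₂(v)`. -/
def r2Pat (v : ℕ) : ℕ → ℕ → PColor := fun x y =>
  match x, y with
  | 0, 0 => PColor.Z4
  | 1, 0 => PColor.negW v
  | 0, 1 => PColor.varAux v
  | _, _ => PColor.varModd v

/-- The `4 × 2` subpattern `r₃(v)`: bottom row `a v ¬v b`, top row `→₀ OR OR +`. -/
def r3Pat (v : ℕ) : ℕ → ℕ → PColor := fun x y =>
  match y, x with
  | 0, 0 => PColor.aC
  | 0, 1 => PColor.varW v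
  | 0, 2 => PColor.negW v
  | 0, _ => PColor.bW
  | 1, 0 => PColor.arrW 0
  | 1, 3 => PColor.plus
  | _, _ => PColor.orC

/-- The color of a literal. -/
def litColor (l : Lit) : PColor := if l.2 then PColor.varW l.1 else PColor.negW l.1

/-- The `5 × 2` subpattern `s(C)` for a clause `C = (c₁ ∨ c₂ ∨ c₃)`:
bottom row `a c₁ c₂ c₃ b`, top row `→₀ OR OR OR +`. -/
def sPat (cl : Clause3) : ℕ → ℕ → PColor := fun x y =>
  match y, x with
  | 0, 0 => PColor.aC
  | 0, 1 => litColor cl.1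
  | 0, 2 => litColor cl.2.1
  | 0, 3 => litColor cl.2.2
  | 0, _ => PColor.bW
  | 1, 0 => PColor.arrW 0
  | 1, 4 => PColor.plus
  | _, _ => PColor.orC

/-- A rectangular block: width, height and contents. -/
abbrev PBlock := ℕ × ℕ × (ℕ → ℕ → PColor)

/-- The list of subpatterns of `P_F`: `p`, `q₁, …, q₅`, then `r₁(v), r₂(v), r₃(v)`
for every variable `v`, then `s(C)` for every clause `C`. -/
def blocksOf (F : CNF3) : List PBlock :=
  [(16, 2, pPat), (4, 4, qPat 0), (4, 4, qPat 1), (4, 4, qPat 2), (4, 4, qPat 3),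
    (6, 3, q5Pat)]
    ++ (List.range F.numVars).flatMap
        (fun v => [(2, 2, r1Pat v), (2, 2, r2Pat v), (4, 2, r3Pat v)])
    ++ F.clauses.map (fun cl => (5, 2, sPat cl))

/-- Place the blocks side by side (starting at column `x0`, occupying rows `1, …, h`),
with one column of unique colors before each block and after the last one; all the
remaining positions carry unique colors (`uniq` of the position code). -/
def place : List PBlock → ℕ → ℕ → ℕ → PColor
  | [], _, x, y => PColor.uniq (Nat.pair x y)
  | b :: bs, x0, x, y =>
      if x0 ≤ x ∧ x < x0 + b.1 ∧ 1 ≤ y ∧ y < 1 + b.2.1 then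
        b.2.2 (x - x0) (y - 1)
      else if x < x0 + b.1 + 1 then PColor.uniq (Nat.pair x y)
      else place bs (x0 + b.1 + 1) x y

/-- The pattern `P_F` of the paper, of height `6` and width `45 + 11·|V| + 6·ℓ`. -/
def patF (F : CNF3) : ℕ → ℕ → PColor := fun x y => place (blocksOf F) 1 x y

/-- The width of the pattern `P_F`. -/
def widthF (F : CNF3) : ℕ := 45 + 11 * F.numVars + 6 * F.clauses.length

/-- The three colors black, white, gray. -/
inductive BWG where
  | black | white | gray
deriving DecidableEq

/-- The number of tile types of a given color in a tile assembly system. -/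
def countColor {C G : Type} [DecidableEq C] (T : RTAS C G) (c : C) : ℕ :=
  (T.tiles.filter (fun t => t.color = c)).card

/-- The `ℓ × ℓ` supertile portraying the color `c ∈ [k]` (with `ℓ = 5k + 8`):
white bottom row and left column; gray top row and right column except for one
white position at index `c + 1` of each (the color counters); black interior. -/
def superPat (ℓ c : ℕ) : ℕ → ℕ → BWG := fun x y =>
  if y = 0 then BWG.white
  else if x = 0 then BWG.white
  else if y = ℓ - 1 then (if x = c + 1 then BWG.white else BWG.gray)
  else if x = ℓ - 1 then (if y = c + 1 then BWG.white else BWG.gray)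
  else BWG.black

/-- The black/white/gray pattern `Q` built from the `w × h` pattern `P` with colors
in `[k]`: each position `(x, y)` of `P` is replaced by the `ℓ × ℓ` supertile
portraying `P x y` (supertiles in the bottom row/left column of `P` are
incomplete, lacking their white bottom row/left column), and three gadget rows
and three gadget columns are appended at the top and at the right. -/
def QPat (k w h : ℕ) (P : ℕ → ℕ → ℕ) : ℕ → ℕ → BWG := fun X Y =>
  let ℓ := 5 * k + 8
  if X + 1 < ℓ * w ∧ Y + 1 < ℓ * h then
    superPat ℓ (P ((X + 1) / ℓ) ((Y + 1) / ℓ)) ((X + 1) % ℓ) ((Y + 1) % ℓ)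
  else if X + 1 < ℓ * w then
    -- the three gadget rows
    if Y = ℓ * h then (if X = k then BWG.white else BWG.gray)
    else (if (X + 1) % ℓ = ℓ - 1 then BWG.gray else BWG.black)
  else if Y + 1 < ℓ * h then
    -- the three gadget columns
    if X = ℓ * w then (if Y = k then BWG.white else BWG.gray)
    else (if (Y + 1) % ℓ = ℓ - 1 then BWG.gray else BWG.black)
  else
    -- the top-right 3 × 3 corner
    if X = ℓ * w ∨ Y = ℓ * h then BWG.gray else BWG.black

/-- Width of the pattern `Q`. -/
def QW (k w : ℕ) : ℕ := (5 * k + 8) * w + 2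

/-- Height of the pattern `Q`. -/
def QH (k h : ℕ) : ℕ := (5 * k + 8) * h + 2

/-- `(P, m) ∈ ℐ` (with `m = k + 3`): `P` is, up to an identification `ρ` of its
colors with `[k] = {1, …, k}`, the pattern `P_F` of a 3-CNF formula `F`. -/
def InI (k w h : ℕ) (P : ℕ → ℕ → ℕ) : Prop :=
  ∃ (F : CNF3) (ρ : PColor → ℕ),
    w = widthF F ∧ h = 6 ∧
    Set.BijOn ρ (↑(colorsOf (widthF F) 6 (patF F))) (Set.Icc 1 k) ∧
    ∀ x < w, ∀ y < h, P x y = ρ (patF F x y)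

/-- The tile assignment of the supertile at `(x, y)` of the supertile grid,
as a partial function on inner coordinates: inner position `(i, j)` corresponds
to the global position `(x·ℓ + i - 1, y·ℓ + j - 1)`; positions with `i = 0`
(resp. `j = 0`) exist only if `x ≥ 1` (resp. `y ≥ 1`). -/
def superOpt {G : Type} (ℓ : ℕ) (f : ℕ → ℕ → Tile BWG G) (x y : ℕ) :
    ℕ → ℕ → Option (Tile BWG G) := fun i j =>
  if i < ℓ ∧ j < ℓ ∧ (1 ≤ x ∨ 1 ≤ i) ∧ (1 ≤ y ∨ 1 ≤ j) then
    some (f (x * ℓ + i - 1) (y * ℓ + j - 1))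
  else none

/-- `s(N)`: the north output of a supertile, i.e. the north glue of its tile in
position `C₂` (inner position `(0, ℓ - 1)`); defined for `x ≥ 1`. -/
def stN {G : Type} (ℓ : ℕ) (f : ℕ → ℕ → Tile BWG G) (x y : ℕ) : G :=
  (f (x * ℓ - 1) (y * ℓ + ℓ - 2)).north

/-- `s(E)`: the east output of a supertile, i.e. the east glue of its tile in
position `C₁` (inner position `(ℓ - 1, 0)`); defined for `y ≥ 1`. -/
def stE {G : Type} (ℓ : ℕ) (f : ℕ → ℕ → Tile BWG G) (x y : ℕ) : G :=
  (f (x * ℓ + ℓ - 2) (y * ℓ - 1)).east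

/-- `s(S)`: the south input of a supertile, i.e. the south glue of its tile in
position `A` (inner position `(0, 0)`); defined for `x, y ≥ 1`. -/
def stS {G : Type} (ℓ : ℕ) (f : ℕ → ℕ → Tile BWG G) (x y : ℕ) : G :=
  (f (x * ℓ - 1) (y * ℓ - 1)).south

/-- `s(W)`: the west input of a supertile, i.e. the west glue of its tile in
position `A` (inner position `(0, 0)`); defined for `x, y ≥ 1`. -/
def stW {G : Type} (ℓ : ℕ) (f : ℕ → ℕ → Tile BWG G) (x y : ℕ) : G :=
  (f (x * ℓ - 1) (y * ℓ - 1)).west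

/-- The seven distinguished white positions of a supertile. -/
inductive PosKind where
  | A | B1 | B2 | C1 | C2 | D1 | D2
deriving DecidableEq

/-- The inner coordinates `(i, j)` of a position of kind `p` in a supertile with
side `ℓ` portraying the color `c`. -/
def kindSpec (ℓ c : ℕ) : PosKind → ℕ → ℕ → Prop
  | .A, i, j => i = 0 ∧ j = 0
  | .B1, i, j => 1 ≤ i ∧ i ≤ ℓ - 2 ∧ j = 0
  | .C1, i, j => i = ℓ - 1 ∧ j = 0
  | .B2, i, j => i = 0 ∧ 1 ≤ j ∧ j ≤ ℓ - 2
  | .C2, i, j => i = 0 ∧ j = ℓ - 1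
  | .D1, i, j => i = ℓ - 1 ∧ j = c + 1
  | .D2, i, j => i = c + 1 ∧ j = ℓ - 1

/-- The tile `t` is used at a position of kind `p` in some (possibly incomplete)
supertile of the tile assignment `f`. -/
def UsedAt {G : Type} (k w h : ℕ) (P : ℕ → ℕ → ℕ) (f : ℕ → ℕ → Tile BWG G)
    (t : Tile BWG G) (p : PosKind) : Prop :=
  ∃ x < w, ∃ y < h, ∃ i j, i < 5 * k + 8 ∧ j < 5 * k + 8 ∧
    (1 ≤ x ∨ 1 ≤ i) ∧ (1 ≤ y ∨ 1 ≤ j) ∧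
    kindSpec (5 * k + 8) (P x y) p i j ∧
    f (x * (5 * k + 8) + i - 1) (y * (5 * k + 8) + j - 1) = t


namespace Tile

variable {C G : Type}

def transpose (t : Tile C G) : Tile C G := ⟨t.color, t.east, t.north, t.west, t.south⟩

@[simp] lemma transpose_transpose (t : Tile C G) : t.transpose.transpose = t := rfl

lemma transpose_injective : Function.Injective (transpose : Tile C G → Tile C G) :=
  fun a b h => by rw [← transpose_transpose a, h, transpose_transpose]

end Tile

namespace RTAS

variable {C G : Type}

def transpose (T : RTAS C G) : RTAS C G :=
  ⟨T.tiles.map ⟨Tile.transpose, Tile.transpose_injective⟩, T.seedE, T.seedN⟩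

lemma mem_transpose_tiles {T : RTAS C G} {t : Tile C G} :
    t ∈ T.transpose.tiles ↔ t.transpose ∈ T.tiles := by
  simp only [transpose, Finset.mem_map, Function.Embedding.coeFn_mk]
  exact ⟨by rintro ⟨u, hu, rfl⟩; exact hu, fun h => ⟨_, h, rfl⟩⟩

end RTAS

section TileSystems

variable {C G : Type} {T : RTAS C G}

lemma DirectedTAS.eq_of_south_of_west (hT : DirectedTAS T) {t₁ t₂ : Tile C G}
    (h₁ : t₁ ∈ T.tiles) (h₂ : t₂ ∈ T.tiles) (hs : t₁.south = t₂.south)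
    (hw : t₁.west = t₂.west) : t₁ = t₂ := by
  by_contra hne
  exact (hT t₁ h₁ t₂ h₂ hne).elim (· hs) (· hw)

lemma DirectedTAS.transpose (hT : DirectedTAS T) : DirectedTAS T.transpose := by
  intro t₁ h₁ t₂ h₂ hne
  rw [RTAS.mem_transpose_tiles] at h₁ h₂
  exact (hT _ h₁ _ h₂ fun h => hne (Tile.transpose_injective h)).symm

lemma DirectedTAS.run_eq (hT : DirectedTAS T) {r r' : ℕ → Tile C G} {n : ℕ}
    (hr : ∀ i ≤ n, r i ∈ T.tiles) (hr' : ∀ i ≤ n, r' i ∈ T.tiles)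
    (hs : ∀ i ≤ n, (r i).south = (r' i).south)
    (hw : ∀ i < n, (r (i + 1)).west = (r i).east)
    (hw' : ∀ i < n, (r' (i + 1)).west = (r' i).east)
    (h₀ : r 0 = r' 0) : ∀ i ≤ n, r i = r' i := by
  intro i hi
  induction i with
  | zero => exact h₀
  | succ i ih =>
    exact hT.eq_of_south_of_west (hr _ hi) (hr' _ hi) (hs _ hi)
      (by rw [hw i hi, hw' i hi, ih (by omega)])

lemma IsAssignment.transpose {M N : ℕ} {f : ℕ → ℕ → Tile C G} (hf : IsAssignment T M N f) :
    IsAssignment T.transpose N M fun X Y => (f Y X).transpose := by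
  obtain ⟨hmem, hW, hS, hWE, hSN⟩ := hf
  exact ⟨fun x hx y hy => RTAS.mem_transpose_tiles.2 (hmem y hy x hx), hS, hW,
    fun x hx y hy => hSN y hy x hx, fun x hx y hy => hWE y hy x hx⟩

lemma countColor_transpose [DecidableEq C] (T : RTAS C G) (c : C) :
    countColor T.transpose c = countColor T c := by
  simp only [countColor, RTAS.transpose, Finset.filter_map, Finset.card_map]
  rfl

lemma eq_of_countColor_le_one [DecidableEq C] {c : C} (hc : countColor T c ≤ 1)
    {t₁ t₂ : Tile C G} (h₁ : t₁ ∈ T.tiles) (h₂ : t₂ ∈ T.tiles) (hc₁ : t₁.color = c)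
    (hc₂ : t₂.color = c) : t₁ = t₂ :=
  Finset.card_le_one.1 hc _ (Finset.mem_filter.2 ⟨h₁, hc₁⟩) _ (Finset.mem_filter.2 ⟨h₂, hc₂⟩)

end TileSystems

lemma superPat_comm (ℓ c i j : ℕ) : superPat ℓ c i j = superPat ℓ c j i := by
  unfold superPat
  split_ifs <;> first | rfl | omega

lemma superPat_interior {ℓ c i j : ℕ} (hi : 1 ≤ i) (hi' : i + 2 ≤ ℓ) (hj : 1 ≤ j)
    (hj' : j + 2 ≤ ℓ) : superPat ℓ c i j = BWG.black := by
  unfold superPat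
  rw [if_neg (by omega), if_neg (by omega), if_neg (by omega), if_neg (by omega)]

lemma superPat_top {ℓ c i : ℕ} (hℓ : 2 ≤ ℓ) (hi : 1 ≤ i) :
    superPat ℓ c i (ℓ - 1) = if i = c + 1 then BWG.white else BWG.gray := by
  unfold superPat
  rw [if_neg (by omega), if_neg (by omega), if_pos rfl]

lemma QPat_transpose (k w h : ℕ) (P : ℕ → ℕ → ℕ) (X Y : ℕ) :
    QPat k h w (fun x y => P y x) Y X = QPat k w h P X Y := by
  unfold QPat
  simp only
  split_ifs <;> first | rfl | omega | exact superPat_comm _ _ _ _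

private lemma mul_add_le_mul {x w n : ℕ} (hx : x < w) : x * n + n ≤ n * w := by
  rw [← Nat.succ_mul, Nat.mul_comm]
  exact Nat.mul_le_mul_left _ hx

lemma QPat_supertile {k w h x y i j : ℕ} {P : ℕ → ℕ → ℕ} (hx : x < w) (hy : y < h)
    (hi : i < 5 * k + 8) (hj : j < 5 * k + 8) (hxi : 1 ≤ x ∨ 1 ≤ i) (hyj : 1 ≤ y ∨ 1 ≤ j) :
    QPat k w h P (x * (5 * k + 8) + i - 1) (y * (5 * k + 8) + j - 1) =
      superPat (5 * k + 8) (P x y) i j := by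
  have hℓ : 0 < 5 * k + 8 := by omega
  have hxℓ := mul_add_le_mul (n := 5 * k + 8) hx
  have hyℓ := mul_add_le_mul (n := 5 * k + 8) hy
  have hx1 : 1 ≤ x → 5 * k + 8 ≤ x * (5 * k + 8) := Nat.le_mul_of_pos_left _
  have hy1 : 1 ≤ y → 5 * k + 8 ≤ y * (5 * k + 8) := Nat.le_mul_of_pos_left _
  have cx := Nat.mul_comm x (5 * k + 8)
  have cy := Nat.mul_comm y (5 * k + 8)
  have hX : x * (5 * k + 8) + i - 1 + 1 = i + (5 * k + 8) * x := by omega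
  have hY : y * (5 * k + 8) + j - 1 + 1 = j + (5 * k + 8) * y := by omega
  simp only [QPat, hX, hY, Nat.add_mul_div_left _ _ hℓ, Nat.add_mul_mod_self_left,
    Nat.div_eq_of_lt hi, Nat.div_eq_of_lt hj, Nat.mod_eq_of_lt hi, Nat.mod_eq_of_lt hj,
    Nat.zero_add]
  rw [if_pos ⟨by omega, by omega⟩]

lemma QPat_gadgetRow {k w h X : ℕ} {P : ℕ → ℕ → ℕ} (hX : X + 1 < (5 * k + 8) * w) :
    QPat k w h P X ((5 * k + 8) * h) = if X = k then BWG.white else BWG.gray := by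
  simp [QPat, hX]

lemma QPat_beside_gadgetRow {k w h X Y : ℕ} {P : ℕ → ℕ → ℕ} (hX : X + 1 < (5 * k + 8) * w)
    (hY : Y + 1 = (5 * k + 8) * h ∨ Y = (5 * k + 8) * h + 1) :
    QPat k w h P X Y =
      if (X + 1) % (5 * k + 8) = 5 * k + 8 - 1 then BWG.gray else BWG.black := by
  simp only [QPat]
  rw [if_neg (by omega), if_pos hX, if_neg (by omega)]

namespace PosKind

def swap : PosKind → PosKind
  | A => A
  | B1 => B2
  | B2 => B1
  | C1 => C2
  | C2 => C1
  | D1 => D2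
  | D2 => D1

@[simp] lemma swap_swap (p : PosKind) : p.swap.swap = p := by cases p <;> rfl

end PosKind

lemma kindSpec_swap {ℓ c i j : ℕ} {p : PosKind} (h : kindSpec ℓ c p i j) :
    kindSpec ℓ c p.swap j i := by
  cases p <;> simp only [kindSpec, PosKind.swap] at h ⊢ <;> omega

lemma InI.mem_Icc {k w h : ℕ} {P : ℕ → ℕ → ℕ} (hI : InI k w h P) :
    ∀ x < w, ∀ y < h, P x y ∈ Set.Icc 1 k := by
  obtain ⟨F, ρ, rfl, rfl, hρ, hP⟩ := hI
  intro x hx y hy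
  rw [hP x hx y hy]
  exact hρ.mapsTo (Finset.mem_coe.2 (Finset.mem_image.2
    ⟨(x, y), Finset.mem_product.2 ⟨Finset.mem_range.2 hx, Finset.mem_range.2 hy⟩, rfl⟩))

lemma InI.w_pos {k w h : ℕ} {P : ℕ → ℕ → ℕ} (hI : InI k w h P) : 0 < w := by
  obtain ⟨F, ρ, rfl, -⟩ := hI
  unfold widthF
  omega

lemma InI.h_pos {k w h : ℕ} {P : ℕ → ℕ → ℕ} (hI : InI k w h P) : 0 < h := by
  obtain ⟨F, ρ, -, rfl, -⟩ := hI
  omega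

structure QAssembly (G : Type) where
  k : ℕ
  w : ℕ
  h : ℕ
  P : ℕ → ℕ → ℕ
  T : RTAS BWG G
  f : ℕ → ℕ → Tile BWG G
  directed : DirectedTAS T
  black_le : countColor T BWG.black ≤ 1
  gray_le : countColor T BWG.gray ≤ 2 * k + 3
  isAssignment : IsAssignment T (QW k w) (QH k h) f
  color_eq : ∀ X < QW k w, ∀ Y < QH k h, (f X Y).color = QPat k w h P X Y
  w_pos : 0 < w
  h_pos : 0 < h
  P_mem : ∀ x < w, ∀ y < h, P x y ∈ Set.Icc 1 k

namespace QAssembly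

variable {G : Type} (S : QAssembly G)

local notation "ℓ" => 5 * S.k + 8

def transpose : QAssembly G where
  k := S.k
  w := S.h
  h := S.w
  P x y := S.P y x
  T := S.T.transpose
  f X Y := (S.f Y X).transpose
  directed := S.directed.transpose
  black_le := (countColor_transpose S.T _).trans_le S.black_le
  gray_le := (countColor_transpose S.T _).trans_le S.gray_le
  isAssignment := S.isAssignment.transpose
  color_eq X hX Y hY := (S.color_eq Y hY X hX).trans (QPat_transpose _ _ _ _ _ _).symm
  w_pos := S.h_pos
  h_pos := S.w_pos
  P_mem x hx y hy := S.P_mem y hy x hx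

def Uses (t : Tile BWG G) (p : PosKind) : Prop := UsedAt S.k S.w S.h S.P S.f t p

lemma mem {X Y : ℕ} (hX : X < ℓ * S.w + 2) (hY : Y < ℓ * S.h + 2) : S.f X Y ∈ S.T.tiles :=
  S.isAssignment.1 X hX Y hY

lemma west_eq {X Y : ℕ} (hX : X + 1 < ℓ * S.w + 2) (hY : Y < ℓ * S.h + 2) :
    (S.f (X + 1) Y).west = (S.f X Y).east :=
  S.isAssignment.2.2.2.1 X hX Y hY

lemma south_eq {X Y : ℕ} (hX : X < ℓ * S.w + 2) (hY : Y + 1 < ℓ * S.h + 2) :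
    (S.f X (Y + 1)).south = (S.f X Y).north :=
  S.isAssignment.2.2.2.2 X hX Y hY

lemma ℓ_le_mul_w : ℓ ≤ ℓ * S.w := Nat.le_mul_of_pos_right _ S.w_pos

lemma ℓ_le_mul_h : ℓ ≤ ℓ * S.h := S.transpose.ℓ_le_mul_w

/-- Inner coordinates `ℓ` and beyond reach into the next supertile. -/
def tileIn (x y i j : ℕ) : Tile BWG G := S.f (x * ℓ + i - 1) (y * ℓ + j - 1)

variable {S} {x y i j : ℕ}

lemma tileIn_mem (hx : x < S.w) (hy : y < S.h) (hi : i ≤ ℓ) (hj : j ≤ ℓ) :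
    S.tileIn x y i j ∈ S.T.tiles := by
  have := mul_add_le_mul (n := ℓ) hx
  have := mul_add_le_mul (n := ℓ) hy
  exact S.mem (by omega) (by omega)

lemma tileIn_color (hx : x < S.w) (hy : y < S.h) (hi : i < ℓ) (hj : j < ℓ)
    (hxi : 1 ≤ x ∨ 1 ≤ i) (hyj : 1 ≤ y ∨ 1 ≤ j) :
    (S.tileIn x y i j).color = superPat ℓ (S.P x y) i j := by
  have := mul_add_le_mul (n := ℓ) hx
  have := mul_add_le_mul (n := ℓ) hy
  rw [tileIn, S.color_eq _ (by unfold QW; omega) _ (by unfold QH; omega)]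
  exact QPat_supertile hx hy hi hj hxi hyj

lemma tileIn_west (hx : x < S.w) (hy : y < S.h) (hi : i < ℓ) (hj : j ≤ ℓ)
    (hxi : 1 ≤ x ∨ 1 ≤ i) : (S.tileIn x y (i + 1) j).west = (S.tileIn x y i j).east := by
  have := mul_add_le_mul (n := ℓ) hx
  have := mul_add_le_mul (n := ℓ) hy
  have : 1 ≤ x → ℓ ≤ x * ℓ := Nat.le_mul_of_pos_left _
  have e : x * ℓ + (i + 1) - 1 = x * ℓ + i - 1 + 1 := by omega
  rw [tileIn, tileIn, e]
  exact S.west_eq (by omega) (by omega)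

lemma tileIn_south (hx : x < S.w) (hy : y < S.h) (hi : i ≤ ℓ) (hj : j < ℓ)
    (hyj : 1 ≤ y ∨ 1 ≤ j) : (S.tileIn x y i (j + 1)).south = (S.tileIn x y i j).north :=
  S.transpose.tileIn_west (x := y) (y := x) hy hx hj hi hyj

lemma tileIn_succ_bottom (i : ℕ) : S.tileIn x (y + 1) i 0 = S.tileIn x y i ℓ := by
  simp only [tileIn, Nat.succ_mul, Nat.add_zero]

variable (S)

def blackTile : Tile BWG G := S.f 0 0

def blackN : G := S.blackTile.north

def blackE : G := S.blackTile.east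

lemma tileIn_one_one : S.tileIn 0 0 1 1 = S.blackTile := by
  simp [tileIn, blackTile]

lemma blackTile_mem : S.blackTile ∈ S.T.tiles :=
  S.tileIn_one_one ▸ tileIn_mem S.w_pos S.h_pos (by omega) (by omega)

lemma blackTile_color : S.blackTile.color = BWG.black := by
  rw [← S.tileIn_one_one, tileIn_color S.w_pos S.h_pos (by omega) (by omega) (by omega)
    (by omega)]
  exact superPat_interior le_rfl (by omega) le_rfl (by omega)

variable {S}

lemma eq_blackTile {u : Tile BWG G} (hu : u ∈ S.T.tiles) (hc : u.color = BWG.black) :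
    u = S.blackTile :=
  eq_of_countColor_le_one S.black_le hu S.blackTile_mem hc S.blackTile_color

lemma tileIn_eq_blackTile (hx : x < S.w) (hy : y < S.h) (hi : 1 ≤ i) (hi' : i + 2 ≤ ℓ)
    (hj : 1 ≤ j) (hj' : j + 2 ≤ ℓ) : S.tileIn x y i j = S.blackTile := by
  refine eq_blackTile (tileIn_mem hx hy (by omega) (by omega)) ?_
  rw [tileIn_color hx hy (by omega) (by omega) (by omega) (by omega)]
  exact superPat_interior hi hi' hj hj'

variable (S)

lemma blackTile_south : S.blackTile.south = S.blackN := by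
  have h := tileIn_south (S := S) S.w_pos S.h_pos (i := 1) (j := 1) (by omega) (by omega)
    (by omega)
  rwa [tileIn_eq_blackTile S.w_pos S.h_pos le_rfl (by omega) (by omega) (by omega),
    S.tileIn_one_one] at h

lemma blackTile_west : S.blackTile.west = S.blackE := S.transpose.blackTile_south

variable {S}

lemma color_eq_black_of_south_west {u : Tile BWG G} (hu : u ∈ S.T.tiles)
    (hs : u.south = S.blackN) (hw : u.west = S.blackE) : u.color = BWG.black := by
  rw [S.directed.eq_of_south_of_west hu S.blackTile_mem (hs.trans S.blackTile_south.symm)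
    (hw.trans S.blackTile_west.symm)]
  exact S.blackTile_color

variable (S)

def gadgetRow (m : ℕ) : Tile BWG G := S.f m (ℓ * S.h)

def gadgetCol (m : ℕ) : Tile BWG G := S.f (ℓ * S.w) m

variable {S} {m a b : ℕ}

lemma gadgetRow_mem (hm : m + 2 ≤ ℓ) : S.gadgetRow m ∈ S.T.tiles := by
  have := S.ℓ_le_mul_w
  exact S.mem (by omega) (by omega)

lemma gadgetCol_mem (hm : m + 2 ≤ ℓ) : S.gadgetCol m ∈ S.T.tiles :=
  RTAS.mem_transpose_tiles.1 (S.transpose.gadgetRow_mem hm)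

lemma gadgetRow_color (hm : m + 2 ≤ ℓ) :
    (S.gadgetRow m).color = if m = S.k then BWG.white else BWG.gray := by
  have := S.ℓ_le_mul_w
  rw [gadgetRow, S.color_eq _ (by unfold QW; omega) _ (by unfold QH; omega)]
  exact QPat_gadgetRow (by omega)

lemma gadgetCol_color (hm : m + 2 ≤ ℓ) :
    (S.gadgetCol m).color = if m = S.k then BWG.white else BWG.gray :=
  S.transpose.gadgetRow_color hm

lemma gadgetRow_color_ne_black (hm : m + 2 ≤ ℓ) : (S.gadgetRow m).color ≠ BWG.black := by
  rw [gadgetRow_color hm]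
  split_ifs <;> simp

lemma eq_blackTile_beside_gadgetRow {Y : ℕ} (hm : m + 3 ≤ ℓ)
    (hY : Y + 1 = ℓ * S.h ∨ Y = ℓ * S.h + 1) : S.f m Y = S.blackTile := by
  have := S.ℓ_le_mul_w
  refine eq_blackTile (S.mem (by omega) (by omega)) ?_
  rw [S.color_eq _ (by unfold QW; omega) _ (by unfold QH; omega),
    QPat_beside_gadgetRow (by omega) hY, Nat.mod_eq_of_lt (by omega), if_neg (by omega)]

lemma gadgetRow_south (hm : m + 3 ≤ ℓ) : (S.gadgetRow m).south = S.blackN := by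
  have := S.ℓ_le_mul_w
  have := S.ℓ_le_mul_h
  have e := S.south_eq (X := m) (Y := ℓ * S.h - 1) (by omega) (by omega)
  rw [Nat.sub_add_cancel (by omega)] at e
  rw [gadgetRow, e, eq_blackTile_beside_gadgetRow hm (by omega)]
  rfl

lemma gadgetRow_north (hm : m + 3 ≤ ℓ) : (S.gadgetRow m).north = S.blackN := by
  have := S.ℓ_le_mul_w
  have e := S.south_eq (X := m) (Y := ℓ * S.h) (by omega) (by omega)
  rw [eq_blackTile_beside_gadgetRow hm (Or.inr rfl), S.blackTile_south] at e
  exact e.symm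

lemma gadgetCol_west (hm : m + 3 ≤ ℓ) : (S.gadgetCol m).west = S.blackE :=
  S.transpose.gadgetRow_south hm

lemma gadgetCol_east (hm : m + 3 ≤ ℓ) : (S.gadgetCol m).east = S.blackE :=
  S.transpose.gadgetRow_north hm

lemma gadgetRow_succ_west (hm : m + 3 ≤ ℓ) :
    (S.gadgetRow (m + 1)).west = (S.gadgetRow m).east := by
  have := S.ℓ_le_mul_w
  exact S.west_eq (by omega) (by omega)

lemma gadgetCol_succ_south (hm : m + 3 ≤ ℓ) :
    (S.gadgetCol (m + 1)).south = (S.gadgetCol m).north :=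
  S.transpose.gadgetRow_succ_west hm

lemma gadgetRow_west_ne (hm : m + 3 ≤ ℓ) : (S.gadgetRow m).west ≠ S.blackE := fun hw =>
  gadgetRow_color_ne_black (by omega)
    (color_eq_black_of_south_west (gadgetRow_mem (by omega)) (gadgetRow_south hm) hw)

lemma gadgetRow_east_ne (hm : m + 4 ≤ ℓ) : (S.gadgetRow m).east ≠ S.blackE := by
  rw [← gadgetRow_succ_west (by omega)]
  exact gadgetRow_west_ne (by omega)

lemma gadgetCol_south_ne (hm : m + 3 ≤ ℓ) : (S.gadgetCol m).south ≠ S.blackN :=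
  S.transpose.gadgetRow_west_ne hm

lemma gadgetCol_north_ne (hm : m + 4 ≤ ℓ) : (S.gadgetCol m).north ≠ S.blackN :=
  S.transpose.gadgetRow_east_ne hm

lemma gadgetRow_ne_gadgetCol (ha : a + 3 ≤ ℓ) (hb : b + 3 ≤ ℓ) :
    S.gadgetRow a ≠ S.gadgetCol b := fun he =>
  gadgetRow_color_ne_black (by omega) (color_eq_black_of_south_west (gadgetRow_mem (by omega))
    (gadgetRow_south ha) (he ▸ gadgetCol_west hb))

lemma gadgetRow_add_eq_add (hab : a ≤ b) (he : S.gadgetRow a = S.gadgetRow b) {n : ℕ}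
    (hn : b + n + 3 ≤ ℓ) : S.gadgetRow (a + n) = S.gadgetRow (b + n) :=
  S.directed.run_eq (r := fun i => S.gadgetRow (a + i)) (r' := fun i => S.gadgetRow (b + i))
    (fun i hi => gadgetRow_mem (by omega)) (fun i hi => gadgetRow_mem (by omega))
    (fun i hi => by simp only [gadgetRow_south (show a + i + 3 ≤ ℓ by omega),
      gadgetRow_south (show b + i + 3 ≤ ℓ by omega)])
    (fun i hi => gadgetRow_succ_west (m := a + i) (by omega))
    (fun i hi => gadgetRow_succ_west (m := b + i) (by omega))
    he n le_rfl

/-- Shifting an identification `a < b` until `a` reaches the white index `k` identifies the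
white gadget tile with a gray one. -/
lemma gadgetRow_ne (hab : a < b) (hak : a ≤ S.k) (hb : b + (S.k - a) + 3 ≤ ℓ) :
    S.gadgetRow a ≠ S.gadgetRow b := by
  intro he
  have h := congrArg Tile.color (gadgetRow_add_eq_add hab.le he hb)
  rw [Nat.add_sub_cancel' hak, gadgetRow_color (by omega), gadgetRow_color (by omega),
    if_pos rfl, if_neg (by omega)] at h
  cases h

lemma gadgetRow_injOn : Set.InjOn S.gadgetRow (Set.Iic (S.k + 1)) := by
  intro a (ha : a ≤ S.k + 1) b (hb : b ≤ S.k + 1) he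
  by_contra hne
  rcases Nat.lt_or_gt_of_ne hne with h | h
  · exact gadgetRow_ne h (by omega) (by omega) he
  · exact gadgetRow_ne h (by omega) (by omega) he.symm

lemma gadgetCol_injOn : Set.InjOn S.gadgetCol (Set.Iic (S.k + 1)) := fun _ ha _ hb he =>
  S.transpose.gadgetRow_injOn ha hb (congrArg Tile.transpose he)

lemma tileIn_top_color (hx : x < S.w) (hy : y < S.h) (hi1 : 1 ≤ i) (hi : i < ℓ) :
    (S.tileIn x y i (ℓ - 1)).color = if i = S.P x y + 1 then BWG.white else BWG.gray := by
  rw [tileIn_color hx hy hi (by omega) (Or.inr hi1) (Or.inr (by omega))]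
  exact superPat_top (by omega) hi1

lemma tileIn_right_color (hx : x < S.w) (hy : y < S.h) (hj1 : 1 ≤ j) (hj : j < ℓ) :
    (S.tileIn x y (ℓ - 1) j).color = if j = S.P x y + 1 then BWG.white else BWG.gray :=
  S.transpose.tileIn_top_color hy hx hj1 hj

lemma tileIn_top_color_ne_black (hx : x < S.w) (hy : y < S.h) (hi1 : 1 ≤ i) (hi : i < ℓ) :
    (S.tileIn x y i (ℓ - 1)).color ≠ BWG.black := by
  rw [tileIn_top_color hx hy hi1 hi]
  split_ifs <;> simp

lemma tileIn_top_south (hx : x < S.w) (hy : y < S.h) (hi1 : 1 ≤ i) (hi : i + 2 ≤ ℓ) :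
    (S.tileIn x y i (ℓ - 1)).south = S.blackN := by
  have e := tileIn_south hx hy (i := i) (j := ℓ - 2) (by omega) (by omega) (Or.inr (by omega))
  rw [show ℓ - 2 + 1 = ℓ - 1 by omega,
    tileIn_eq_blackTile (j := ℓ - 2) hx hy hi1 hi (by omega) (by omega)] at e
  exact e

lemma tileIn_right_west (hx : x < S.w) (hy : y < S.h) (hj1 : 1 ≤ j) (hj : j + 2 ≤ ℓ) :
    (S.tileIn x y (ℓ - 1) j).west = S.blackE :=
  S.transpose.tileIn_top_south hy hx hj1 hj

lemma tileIn_corner_color (hx : x < S.w) (hy : y < S.h) :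
    (S.tileIn x y (ℓ - 1) (ℓ - 1)).color = BWG.gray := by
  have := (S.P_mem x hx y hy).2
  rw [tileIn_top_color hx hy (by omega) (by omega), if_neg (by omega)]

lemma tileIn_corner_west (hx : x < S.w) (hy : y < S.h) :
    (S.tileIn x y (ℓ - 1) (ℓ - 1)).west = (S.tileIn x y (ℓ - 2) (ℓ - 1)).east := by
  have e := tileIn_west hx hy (i := ℓ - 2) (j := ℓ - 1) (by omega) (by omega) (Or.inr (by omega))
  rwa [show ℓ - 2 + 1 = ℓ - 1 by omega] at e

lemma tileIn_corner_south (hx : x < S.w) (hy : y < S.h) :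
    (S.tileIn x y (ℓ - 1) (ℓ - 1)).south = (S.tileIn x y (ℓ - 1) (ℓ - 2)).north :=
  S.transpose.tileIn_corner_west hy hx

variable (S)

/-- Index `k` carries the white tile, and all indices beyond `k + 1` turn out to carry the same
tile as `k + 1`. -/
def IsCounter (u : Tile BWG G) : Prop :=
  ∃ m ≤ S.k + 1, m ≠ S.k ∧ (u = S.gadgetRow m ∨ u = S.gadgetCol m)

variable {S} {u v : Tile BWG G}

lemma IsCounter.south_or_west (hu : S.IsCounter u) :
    u.south = S.blackN ∨ u.west = S.blackE := by
  obtain ⟨m, hm, -, rfl | rfl⟩ := hu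
  · exact Or.inl (gadgetRow_south (by omega))
  · exact Or.inr (gadgetCol_west (by omega))

lemma IsCounter.exists_eq_gadgetRow (hu : S.IsCounter u) (hs : u.south = S.blackN) :
    ∃ m ≤ S.k + 1, m ≠ S.k ∧ u = S.gadgetRow m := by
  obtain ⟨m, hm, hmk, rfl | rfl⟩ := hu
  · exact ⟨m, hm, hmk, rfl⟩
  · exact absurd hs (gadgetCol_south_ne (by omega))

lemma IsCounter.exists_eq_gadgetCol (hu : S.IsCounter u) (hw : u.west = S.blackE) :
    ∃ m ≤ S.k + 1, m ≠ S.k ∧ u = S.gadgetCol m := by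
  obtain ⟨m, hm, hmk, rfl | rfl⟩ := hu
  · exact absurd hw (gadgetRow_west_ne (by omega))
  · exact ⟨m, hm, hmk, rfl⟩

lemma exists_finset_isCounter :
    ∃ s : Finset (Tile BWG G), s.card = 2 * S.k + 2 ∧ ∀ u, u ∈ s ↔ S.IsCounter u := by
  classical
  let idx := (Finset.range (S.k + 2)).erase S.k
  have hidx : ∀ m, m ∈ idx ↔ m ≤ S.k + 1 ∧ m ≠ S.k := by
    intro m
    simp only [idx, Finset.mem_erase, Finset.mem_range]
    omega
  refine ⟨idx.image S.gadgetRow ∪ idx.image S.gadgetCol, ?_, fun u => ?_⟩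
  · rw [Finset.card_union_of_disjoint,
      Finset.card_image_of_injOn (gadgetRow_injOn.mono fun m hm => ((hidx m).1 hm).1),
      Finset.card_image_of_injOn (gadgetCol_injOn.mono fun m hm => ((hidx m).1 hm).1),
      Finset.card_erase_of_mem (by simp), Finset.card_range]
    · omega
    · simp only [Finset.disjoint_left, Finset.mem_image]
      rintro _ ⟨a, ha, rfl⟩ ⟨b, hb, he⟩
      have := (hidx a).1 ha
      have := (hidx b).1 hb
      exact gadgetRow_ne_gadgetCol (by omega) (by omega) he.symm
  · simp only [Finset.mem_union, Finset.mem_image, hidx, IsCounter]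
    constructor
    · rintro (⟨m, ⟨hm, hmk⟩, rfl⟩ | ⟨m, ⟨hm, hmk⟩, rfl⟩)
      exacts [⟨m, hm, hmk, Or.inl rfl⟩, ⟨m, hm, hmk, Or.inr rfl⟩]
    · rintro ⟨m, hm, hmk, rfl | rfl⟩
      exacts [Or.inl ⟨m, ⟨hm, hmk⟩, rfl⟩, Or.inr ⟨m, ⟨hm, hmk⟩, rfl⟩]

lemma IsCounter.mem_filter_gray (hu : S.IsCounter u) :
    u ∈ S.T.tiles.filter (·.color = BWG.gray) := by
  obtain ⟨m, hm, hmk, rfl | rfl⟩ := hu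
  · exact Finset.mem_filter.2 ⟨gadgetRow_mem (by omega), by
      rw [gadgetRow_color (by omega), if_neg hmk]⟩
  · exact Finset.mem_filter.2 ⟨gadgetCol_mem (by omega), by
      rw [gadgetCol_color (by omega), if_neg hmk]⟩

/-- The `2k + 2` counter tiles exhaust the gray budget `2k + 3` up to a single tile type. -/
lemma eq_of_not_isCounter (hu : u ∈ S.T.tiles) (hug : u.color = BWG.gray)
    (hu' : ¬S.IsCounter u) (hv : v ∈ S.T.tiles) (hvg : v.color = BWG.gray)
    (hv' : ¬S.IsCounter v) : u = v := by
  classical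
  obtain ⟨s, hcard, hs⟩ := S.exists_finset_isCounter
  have hsub : s ⊆ S.T.tiles.filter (·.color = BWG.gray) := fun g hg =>
    ((hs g).1 hg).mem_filter_gray
  have hrest : (S.T.tiles.filter (·.color = BWG.gray) \ s).card ≤ 1 := by
    have := S.gray_le
    unfold countColor at this
    rw [Finset.card_sdiff_of_subset hsub]
    omega
  exact Finset.card_le_one.1 hrest u
    (Finset.mem_sdiff.2 ⟨Finset.mem_filter.2 ⟨hu, hug⟩, fun h => hu' ((hs u).1 h)⟩) v
    (Finset.mem_sdiff.2 ⟨Finset.mem_filter.2 ⟨hv, hvg⟩, fun h => hv' ((hs v).1 h)⟩)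

/-- If `u.east ≠ blackE`, chasing glues around the top right corner of supertile `(0, 0)` puts
`u` just below that corner, where its inputs would be `blackN` and `blackE`. -/
lemma east_eq_blackE_of_not_isCounter (hu : u ∈ S.T.tiles) (hug : u.color = BWG.gray)
    (hu' : ¬S.IsCounter u) (hs : u.south = S.blackN) : u.east = S.blackE := by
  by_contra hue
  have hx := S.w_pos
  have hy := S.h_pos
  have hc := (S.P_mem 0 hx 0 hy).2
  have counter_or_eq : ∀ g ∈ S.T.tiles, g.color = BWG.gray → S.IsCounter g ∨ g = u :=
    fun g hg hgg => or_iff_not_imp_left.2 fun hg' => eq_of_not_isCounter hg hgg hg' hu hug hu'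
  have h_top : (S.tileIn 0 0 (ℓ - 2) (ℓ - 1)).east ≠ S.blackE := by
    rcases counter_or_eq (S.tileIn 0 0 (ℓ - 2) (ℓ - 1)) (tileIn_mem hx hy (by omega) (by omega))
      (by rw [tileIn_top_color hx hy (by omega) (by omega), if_neg (by omega)]) with h | h
    · obtain ⟨m, hm, -, he⟩ := h.exists_eq_gadgetRow (tileIn_top_south hx hy (by omega) le_rfl)
      exact he ▸ gadgetRow_east_ne (by omega)
    · exact h ▸ hue
  have h_corner : (S.tileIn 0 0 (ℓ - 1) (ℓ - 1)).south = S.blackN := by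
    rcases counter_or_eq (S.tileIn 0 0 (ℓ - 1) (ℓ - 1)) (tileIn_mem hx hy (by omega) (by omega))
      (tileIn_corner_color hx hy) with h | h
    · exact h.south_or_west.resolve_right (tileIn_corner_west hx hy ▸ h_top)
    · exact h ▸ hs
  have h_right : S.tileIn 0 0 (ℓ - 1) (ℓ - 2) = u := by
    rcases counter_or_eq (S.tileIn 0 0 (ℓ - 1) (ℓ - 2)) (tileIn_mem hx hy (by omega) (by omega))
      (by rw [tileIn_right_color hx hy (by omega) (by omega), if_neg (by omega)]) with h | h
    · obtain ⟨m, hm, -, he⟩ := h.exists_eq_gadgetCol (tileIn_right_west hx hy (by omega) le_rfl)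
      exact absurd (tileIn_corner_south hx hy ▸ h_corner) (he ▸ gadgetCol_north_ne (by omega))
    · exact h
  have := color_eq_black_of_south_west hu hs (h_right ▸ tileIn_right_west hx hy (by omega) le_rfl)
  rw [hug] at this
  cases this

lemma gadgetRow_succ_sat : S.gadgetRow (S.k + 2) = S.gadgetRow (S.k + 1) := by
  have hcounter : S.IsCounter (S.gadgetRow (S.k + 2)) := by
    by_contra h
    exact gadgetRow_east_ne (by omega) (east_eq_blackE_of_not_isCounter
      (gadgetRow_mem (by omega)) (by rw [gadgetRow_color (by omega), if_neg (by omega)]) h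
      (gadgetRow_south (by omega)))
  obtain ⟨m, hm, hmk, he⟩ := hcounter.exists_eq_gadgetRow (gadgetRow_south (by omega))
  rcases Nat.lt_or_ge m S.k with hlt | hge
  · exact absurd he.symm (gadgetRow_ne (by omega) hlt.le (by omega))
  · rwa [show m = S.k + 1 by omega] at he

variable (S)

/-- The counter saturates: `gadgetRow (k + 1)` passes this glue on unchanged
(`gadgetRow_sat_east`). -/
def satH : G := (S.gadgetRow (S.k + 1)).west

def satV : G := (S.gadgetCol (S.k + 1)).south

lemma gadgetRow_sat_east : (S.gadgetRow (S.k + 1)).east = S.satH := by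
  rw [satH, ← gadgetRow_succ_west (by omega), gadgetRow_succ_sat]

lemma satH_ne_blackE : S.satH ≠ S.blackE := gadgetRow_west_ne (by omega)

lemma satV_ne_blackN : S.satV ≠ S.blackN := S.transpose.satH_ne_blackE

variable {S}

lemma gadgetRow_eq_sat (hm : S.k + 1 ≤ m) (hm' : m + 3 ≤ ℓ) :
    S.gadgetRow m = S.gadgetRow (S.k + 1) := by
  have h := S.directed.run_eq (r := fun i => S.gadgetRow (S.k + 1 + i))
    (r' := fun _ => S.gadgetRow (S.k + 1)) (n := m - (S.k + 1))
    (fun i hi => gadgetRow_mem (by omega)) (fun _ _ => gadgetRow_mem (by omega))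
    (fun i hi => by simp only [gadgetRow_south (show S.k + 1 + i + 3 ≤ ℓ by omega),
      gadgetRow_south (show S.k + 1 + 3 ≤ ℓ by omega)])
    (fun i hi => gadgetRow_succ_west (m := S.k + 1 + i) (by omega))
    (fun _ _ => S.gadgetRow_sat_east.symm) rfl (m - (S.k + 1)) le_rfl
  rwa [Nat.add_sub_cancel' hm] at h

lemma exists_tileIn_top_eq_gadgetRow (hx : x < S.w) (hy : y < S.h) (hi1 : 1 ≤ i)
    (hi : i + 3 ≤ ℓ) (hic : i ≠ S.P x y + 1) :
    ∃ m ≤ S.k + 1, m ≠ S.k ∧ S.tileIn x y i (ℓ - 1) = S.gadgetRow m := by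
  have hsouth := tileIn_top_south hx hy hi1 (by omega)
  refine IsCounter.exists_eq_gadgetRow ?_ hsouth
  by_contra hnc
  have heast := east_eq_blackE_of_not_isCounter (tileIn_mem hx hy (by omega) (by omega))
    (by rw [tileIn_top_color hx hy hi1 (by omega), if_neg hic]) hnc hsouth
  exact tileIn_top_color_ne_black hx hy (i := i + 1) (by omega) (by omega)
    (color_eq_black_of_south_west (tileIn_mem hx hy (by omega) (by omega))
      (tileIn_top_south hx hy (by omega) (by omega))
      (by rw [tileIn_west hx hy (by omega) (by omega) (Or.inr hi1), heast]))

lemma tileIn_top_eq (hx : x < S.w) (hy : y < S.h) (hi1 : 1 ≤ i) (hi : i ≤ S.P x y + 1) :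
    S.tileIn x y i (ℓ - 1) = S.gadgetRow (S.k - S.P x y + (i - 1)) := by
  obtain ⟨hc1, hck⟩ := S.P_mem x hx y hy
  obtain ⟨m₀, hm₀, -, h₀⟩ := exists_tileIn_top_eq_gadgetRow hx hy le_rfl (by omega) (by omega)
  have hrun := S.directed.run_eq (r := fun n => S.tileIn x y (1 + n) (ℓ - 1))
    (r' := fun n => S.gadgetRow (m₀ + n)) (n := S.P x y)
    (fun n hn => tileIn_mem hx hy (by omega) (by omega)) (fun n hn => gadgetRow_mem (by omega))
    (fun n hn => by rw [tileIn_top_south hx hy (by omega) (by omega), gadgetRow_south (by omega)])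
    (fun n hn => tileIn_west (i := 1 + n) hx hy (by omega) (by omega) (Or.inr (by omega)))
    (fun n hn => gadgetRow_succ_west (m := m₀ + n) (by omega)) h₀
  have hwhite : m₀ + S.P x y = S.k := by
    have h := congrArg Tile.color (hrun _ le_rfl)
    rw [tileIn_top_color hx hy (by omega) (by omega), if_pos (by omega),
      gadgetRow_color (by omega)] at h
    by_contra hne
    rw [if_neg hne] at h
    cases h
  have h := hrun (i - 1) (by omega)
  rwa [show 1 + (i - 1) = i by omega, show m₀ + (i - 1) = S.k - S.P x y + (i - 1) by omega] at h

lemma tileIn_top_eq_sat (hx : x < S.w) (hy : y < S.h) (hi1 : S.P x y + 2 ≤ i) (hi : i + 2 ≤ ℓ) :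
    S.tileIn x y i (ℓ - 1) = S.gadgetRow (S.k + 1) := by
  obtain ⟨hc1, hck⟩ := S.P_mem x hx y hy
  have hD := tileIn_top_eq hx hy (i := S.P x y + 1) (by omega) le_rfl
  rw [show S.k - S.P x y + (S.P x y + 1 - 1) = S.k by omega] at hD
  have h₀ : S.tileIn x y (S.P x y + 2) (ℓ - 1) = S.gadgetRow (S.k + 1) :=
    S.directed.eq_of_south_of_west (tileIn_mem hx hy (by omega) (by omega))
      (gadgetRow_mem (by omega))
      (by rw [tileIn_top_south hx hy (by omega) (by omega), gadgetRow_south (by omega)])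
      (by rw [tileIn_west (i := S.P x y + 1) hx hy (by omega) (by omega) (Or.inr (by omega)),
        hD, gadgetRow_succ_west (by omega)])
  have h := S.directed.run_eq (r := fun n => S.tileIn x y (S.P x y + 2 + n) (ℓ - 1))
    (r' := fun _ => S.gadgetRow (S.k + 1)) (n := i - (S.P x y + 2))
    (fun n hn => tileIn_mem hx hy (by omega) (by omega)) (fun _ _ => gadgetRow_mem (by omega))
    (fun n hn => by rw [tileIn_top_south hx hy (by omega) (by omega), gadgetRow_south (by omega)])
    (fun n hn => tileIn_west (i := S.P x y + 2 + n) hx hy (by omega) (by omega)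
      (Or.inr (by omega)))
    (fun _ _ => S.gadgetRow_sat_east.symm) h₀ _ le_rfl
  rwa [Nat.add_sub_cancel' hi1] at h

lemma tileIn_top_north (hx : x < S.w) (hy : y < S.h) (hi1 : 1 ≤ i) (hi : i + 2 ≤ ℓ) :
    (S.tileIn x y i (ℓ - 1)).north = S.blackN := by
  have hck := (S.P_mem x hx y hy).2
  rcases le_or_gt i (S.P x y + 1) with h | h
  · rw [tileIn_top_eq hx hy hi1 h, gadgetRow_north (by omega)]
  · rw [tileIn_top_eq_sat hx hy h hi, gadgetRow_north (by omega)]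

lemma tileIn_right_one (hx : x < S.w) (hy : y < S.h) :
    S.tileIn x y (ℓ - 1) 1 = S.gadgetCol (S.k - S.P x y) :=
  Tile.transpose_injective (S.transpose.tileIn_top_eq hy hx le_rfl
    (by have := (S.P_mem x hx y hy).1; omega))

lemma tileIn_D2 (hx : x < S.w) (hy : y < S.h) :
    S.tileIn x y (S.P x y + 1) (ℓ - 1) = S.gadgetRow S.k := by
  rw [tileIn_top_eq hx hy (by omega) le_rfl, Nat.add_sub_cancel,
    Nat.sub_add_cancel (S.P_mem x hx y hy).2]

lemma tileIn_corner_west_eq_satH (hx : x < S.w) (hy : y < S.h) :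
    (S.tileIn x y (ℓ - 1) (ℓ - 1)).west = S.satH := by
  have := (S.P_mem x hx y hy).2
  rw [tileIn_corner_west hx hy, tileIn_top_eq_sat hx hy (by omega) (by omega),
    gadgetRow_sat_east]

lemma tileIn_corner_south_eq_satV (hx : x < S.w) (hy : y < S.h) :
    (S.tileIn x y (ℓ - 1) (ℓ - 1)).south = S.satV :=
  S.transpose.tileIn_corner_west_eq_satH hy hx

variable (S)

def cornerTile : Tile BWG G := S.tileIn 0 0 (ℓ - 1) (ℓ - 1)

lemma cornerTile_mem : S.cornerTile ∈ S.T.tiles := tileIn_mem S.w_pos S.h_pos (by omega) (by omega)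

lemma cornerTile_color : S.cornerTile.color = BWG.gray := tileIn_corner_color S.w_pos S.h_pos

lemma cornerTile_west : S.cornerTile.west = S.satH := tileIn_corner_west_eq_satH S.w_pos S.h_pos

lemma cornerTile_south : S.cornerTile.south = S.satV :=
  tileIn_corner_south_eq_satV S.w_pos S.h_pos

lemma cornerTile_not_isCounter : ¬S.IsCounter S.cornerTile := fun h =>
  h.south_or_west.elim (fun hs => S.satV_ne_blackN (S.cornerTile_south ▸ hs))
    (fun hw => S.satH_ne_blackE (S.cornerTile_west ▸ hw))

variable {S}

lemma tileIn_corner_eq (hx : x < S.w) (hy : y < S.h) :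
    S.tileIn x y (ℓ - 1) (ℓ - 1) = S.cornerTile :=
  S.directed.eq_of_south_of_west (tileIn_mem hx hy (by omega) (by omega)) S.cornerTile_mem
    (by rw [tileIn_corner_south_eq_satV hx hy, cornerTile_south])
    (by rw [tileIn_corner_west_eq_satH hx hy, cornerTile_west])

lemma eq_cornerTile_of_not_isCounter (hu : u ∈ S.T.tiles) (hug : u.color = BWG.gray)
    (hu' : ¬S.IsCounter u) : u = S.cornerTile :=
  eq_of_not_isCounter hu hug hu' S.cornerTile_mem S.cornerTile_color S.cornerTile_not_isCounter

lemma f_below_gadgetRow_eq_cornerTile : S.f (ℓ - 2) (ℓ * S.h - 2) = S.cornerTile := by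
  have := S.ℓ_le_mul_h
  have e : (S.h - 1) * ℓ + ℓ = ℓ * S.h := by
    rw [← Nat.succ_mul, Nat.succ_eq_add_one, Nat.sub_add_cancel S.h_pos, Nat.mul_comm]
  have h := tileIn_corner_eq (S := S) (x := 0) (y := S.h - 1) S.w_pos (by have := S.h_pos; omega)
  simp only [tileIn, Nat.zero_mul, Nat.zero_add] at h
  rwa [show (S.h - 1) * ℓ + (ℓ - 1) - 1 = ℓ * S.h - 2 by omega,
    show ℓ - 1 - 1 = ℓ - 2 by omega] at h

/-- The position is gray with a black western neighbour, while the only non-counter gray tile,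
the corner tile, has west glue `satH`. -/
lemma exists_gadgetCol_eq_above_corner : ∃ m ≤ S.k + 1, m ≠ S.k ∧
    S.f (ℓ - 2) (ℓ * S.h - 1) = S.gadgetCol m := by
  have := S.ℓ_le_mul_w
  have := S.ℓ_le_mul_h
  have hwest : (S.f (ℓ - 2) (ℓ * S.h - 1)).west = S.blackE := by
    have e := S.west_eq (X := ℓ - 3) (Y := ℓ * S.h - 1) (by omega) (by omega)
    rw [show ℓ - 3 + 1 = ℓ - 2 by omega,
      eq_blackTile_beside_gadgetRow (m := ℓ - 3) (by omega) (by omega)] at e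
    exact e
  have hgray : (S.f (ℓ - 2) (ℓ * S.h - 1)).color = BWG.gray := by
    rw [S.color_eq _ (by unfold QW; omega) _ (by unfold QH; omega),
      QPat_beside_gadgetRow (by omega) (by omega), show ℓ - 2 + 1 = ℓ - 1 by omega,
      Nat.mod_eq_of_lt (by omega), if_pos rfl]
  refine IsCounter.exists_eq_gadgetCol (by_contra fun h => ?_) hwest
  exact S.satH_ne_blackE (by
    rw [← S.cornerTile_west, ← eq_cornerTile_of_not_isCounter (S.mem (by omega) (by omega))
      hgray h, hwest])

/-- Above the corner tile sits a column counter tile `gadgetCol m`, and above that the gadget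
row tile `gadgetRow (ℓ - 2)`, which is forced to be the corner tile; so `satV` is the north glue
of `gadgetCol m`, which pins `m` down to `k + 1`. -/
lemma cornerTile_north : S.cornerTile.north = S.satV := by
  have := S.ℓ_le_mul_w
  have := S.ℓ_le_mul_h
  obtain ⟨m, hm, hmk, hγ⟩ := S.exists_gadgetCol_eq_above_corner
  have hγ_south : (S.gadgetCol m).south = S.cornerTile.north := by
    have e := S.south_eq (X := ℓ - 2) (Y := ℓ * S.h - 2) (by omega) (by omega)
    rwa [show ℓ * S.h - 2 + 1 = ℓ * S.h - 1 by omega, S.f_below_gadgetRow_eq_cornerTile, hγ] at e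
  have hδ_south : (S.gadgetRow (ℓ - 2)).south = (S.gadgetCol m).north := by
    have e := S.south_eq (X := ℓ - 2) (Y := ℓ * S.h - 1) (by omega) (by omega)
    rwa [Nat.sub_add_cancel (by omega), hγ] at e
  have hδ_west : (S.gadgetRow (ℓ - 2)).west = S.satH := by
    rw [show ℓ - 2 = ℓ - 3 + 1 by omega, gadgetRow_succ_west (by omega),
      gadgetRow_eq_sat (by omega) (by omega), gadgetRow_sat_east]
  have hδ : S.gadgetRow (ℓ - 2) = S.cornerTile := by
    refine eq_cornerTile_of_not_isCounter (gadgetRow_mem (by omega))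
      (by rw [gadgetRow_color (by omega), if_neg (by omega)]) fun h => ?_
    rcases h.south_or_west with hs | hw
    · exact gadgetCol_north_ne (by omega) (hδ_south ▸ hs)
    · exact S.satH_ne_blackE (hδ_west ▸ hw)
  have hsucc : S.gadgetCol (m + 1) = S.gadgetCol (S.k + 1) :=
    S.directed.eq_of_south_of_west (gadgetCol_mem (by omega)) (gadgetCol_mem (by omega))
      (by rw [gadgetCol_succ_south (by omega), ← hδ_south, hδ, cornerTile_south]; rfl)
      (by rw [gadgetCol_west (by omega), gadgetCol_west (by omega)])
  have hm' : m = S.k + 1 := by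
    by_contra hne
    have := gadgetCol_injOn (S := S) (show m + 1 ≤ S.k + 1 by omega)
      (show S.k + 1 ≤ S.k + 1 from le_rfl) hsucc
    omega
  rw [← hγ_south, hm']
  rfl

lemma tileIn_bottom_color (hx : x < S.w) (hy : y < S.h) (hy1 : 1 ≤ y) (hi : i < ℓ)
    (hxi : 1 ≤ x ∨ 1 ≤ i) : (S.tileIn x y i 0).color = BWG.white := by
  rw [tileIn_color hx hy hi (by omega) hxi (Or.inl hy1)]
  simp [superPat]

lemma tileIn_left_color (hx : x < S.w) (hy : y < S.h) (hx1 : 1 ≤ x) (hj : j < ℓ)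
    (hyj : 1 ≤ y ∨ 1 ≤ j) : (S.tileIn x y 0 j).color = BWG.white :=
  S.transpose.tileIn_bottom_color hy hx hx1 hj hyj

lemma tileIn_bottom_south (hx : x < S.w) (hy : y < S.h) (hy1 : 1 ≤ y) (hi : i ≤ ℓ) :
    (S.tileIn x y i 0).south = (S.tileIn x (y - 1) i (ℓ - 1)).north := by
  obtain ⟨y, rfl⟩ : ∃ y', y = y' + 1 := ⟨y - 1, by omega⟩
  have e := tileIn_south hx (y := y) (by omega) (i := i) (j := ℓ - 1) hi (by omega)
    (Or.inr (by omega))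
  rw [show ℓ - 1 + 1 = ℓ by omega] at e
  rw [tileIn_succ_bottom, Nat.add_sub_cancel, e]

lemma tileIn_bottom_south_eq_blackN (hx : x < S.w) (hy : y < S.h) (hy1 : 1 ≤ y) (hi1 : 1 ≤ i)
    (hi : i + 2 ≤ ℓ) : (S.tileIn x y i 0).south = S.blackN := by
  rw [tileIn_bottom_south hx hy hy1 (by omega), tileIn_top_north hx (by omega) hi1 hi]

lemma tileIn_left_west_eq_blackE (hx : x < S.w) (hy : y < S.h) (hx1 : 1 ≤ x) (hj1 : 1 ≤ j)
    (hj : j + 2 ≤ ℓ) : (S.tileIn x y 0 j).west = S.blackE :=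
  S.transpose.tileIn_bottom_south_eq_blackN hy hx hx1 hj1 hj

lemma tileIn_bottom_north_eq_blackN (hx : x < S.w) (hy : y < S.h) (hy1 : 1 ≤ y) (hi1 : 1 ≤ i)
    (hi : i + 2 ≤ ℓ) : (S.tileIn x y i 0).north = S.blackN := by
  rw [← tileIn_south hx hy (j := 0) (by omega) (by omega) (Or.inl hy1),
    tileIn_eq_blackTile hx hy hi1 hi le_rfl (by omega), blackTile_south]

/-- The four combinations of these inputs are those of the black tile, of the saturated tiles
of the two gadget counters and of the corner tile. -/
lemma color_ne_white_of_inputs (hu : u ∈ S.T.tiles) (hs : u.south = S.blackN ∨ u.south = S.satV)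
    (hw : u.west = S.blackE ∨ u.west = S.satH) : u.color ≠ BWG.white := by
  rcases hs with hs | hs <;> rcases hw with hw | hw
  · rw [color_eq_black_of_south_west hu hs hw]
    simp
  · rw [S.directed.eq_of_south_of_west hu (gadgetRow_mem (by omega))
      (by rw [hs, gadgetRow_south (by omega)]) hw, gadgetRow_color (by omega), if_neg (by omega)]
    simp
  · rw [S.directed.eq_of_south_of_west hu (gadgetCol_mem (by omega)) hs
      (by rw [hw, gadgetCol_west (by omega)]), gadgetCol_color (by omega), if_neg (by omega)]
    simp
  · rw [S.directed.eq_of_south_of_west hu S.cornerTile_mem (hs.trans S.cornerTile_south.symm)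
      (hw.trans S.cornerTile_west.symm), cornerTile_color]
    simp

lemma color_ne_white_of_gadgetCol_south (hu : u ∈ S.T.tiles) (hm : m + 3 ≤ ℓ) (hmk : m ≠ S.k)
    (hs : u.south = (S.gadgetCol m).south) (hw : u.west = S.blackE) : u.color ≠ BWG.white := by
  rw [S.directed.eq_of_south_of_west hu (gadgetCol_mem (by omega)) hs
    (hw.trans (gadgetCol_west hm).symm), gadgetCol_color (by omega), if_neg hmk]
  simp

variable {t : Tile BWG G} {p q : PosKind}

lemma Uses.transpose (h : S.Uses t p) : S.transpose.Uses t.transpose p.swap := by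
  obtain ⟨x, hx, y, hy, i, j, hi, hj, hxi, hyj, hk, rfl⟩ := h
  exact ⟨y, hy, x, hx, j, i, hj, hi, hyj, hxi, kindSpec_swap hk, rfl⟩

lemma Uses.exists_A (h : S.Uses t .A) :
    ∃ x < S.w, ∃ y < S.h, 1 ≤ x ∧ 1 ≤ y ∧ S.tileIn x y 0 0 = t := by
  obtain ⟨x, hx, y, hy, i, j, -, -, hxi, hyj, ⟨rfl, rfl⟩, rfl⟩ := h
  exact ⟨x, hx, y, hy, by omega, by omega, rfl⟩

lemma Uses.exists_B1 (h : S.Uses t .B1) :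
    ∃ x < S.w, ∃ y < S.h, 1 ≤ y ∧ ∃ i, 1 ≤ i ∧ i + 2 ≤ ℓ ∧ S.tileIn x y i 0 = t := by
  obtain ⟨x, hx, y, hy, i, j, -, -, -, hyj, ⟨hi1, hi, rfl⟩, rfl⟩ := h
  exact ⟨x, hx, y, hy, by omega, i, hi1, by omega, rfl⟩

lemma Uses.exists_C1 (h : S.Uses t .C1) :
    ∃ x < S.w, ∃ y < S.h, 1 ≤ y ∧ S.tileIn x y (ℓ - 1) 0 = t := by
  obtain ⟨x, hx, y, hy, i, j, -, -, -, hyj, ⟨rfl, rfl⟩, rfl⟩ := h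
  exact ⟨x, hx, y, hy, by omega, rfl⟩

lemma Uses.eq_of_D2 (h : S.Uses t .D2) : t = S.gadgetRow S.k := by
  obtain ⟨x, hx, y, hy, i, j, -, -, -, -, ⟨rfl, rfl⟩, rfl⟩ := h
  exact tileIn_D2 hx hy

lemma Uses.eq_of_D1 (h : S.Uses t .D1) : t = S.gadgetCol S.k :=
  Tile.transpose_injective h.transpose.eq_of_D2

lemma Uses.exists_north_of_A (h : S.Uses t .A) : ∃ u ∈ S.T.tiles,
    u.color = BWG.white ∧ u.west = S.blackE ∧ u.south = t.north := by
  obtain ⟨x, hx, y, hy, hx1, hy1, rfl⟩ := h.exists_A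
  exact ⟨S.tileIn x y 0 1, tileIn_mem hx hy (by omega) (by omega),
    tileIn_left_color hx hy hx1 (by omega) (Or.inr le_rfl),
    tileIn_left_west_eq_blackE hx hy hx1 le_rfl (by omega),
    tileIn_south hx hy (j := 0) (by omega) (by omega) (Or.inl hy1)⟩

lemma Uses.exists_east_of_A (h : S.Uses t .A) : ∃ v ∈ S.T.tiles,
    v.color = BWG.white ∧ v.south = S.blackN ∧ v.west = t.east := by
  obtain ⟨v, hv, hvc, hvs, hvw⟩ := h.transpose.exists_north_of_A
  exact ⟨v.transpose, RTAS.mem_transpose_tiles.1 hv, hvc, hvs, hvw⟩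

lemma Uses.south_of_B1 (h : S.Uses t .B1) : t.south = S.blackN := by
  obtain ⟨x, hx, y, hy, hy1, i, hi1, hi, rfl⟩ := h.exists_B1
  exact tileIn_bottom_south_eq_blackN hx hy hy1 hi1 hi

lemma Uses.north_of_B1 (h : S.Uses t .B1) : t.north = S.blackN := by
  obtain ⟨x, hx, y, hy, hy1, i, hi1, hi, rfl⟩ := h.exists_B1
  exact tileIn_bottom_north_eq_blackN hx hy hy1 hi1 hi

lemma Uses.west_of_B2 (h : S.Uses t .B2) : t.west = S.blackE := h.transpose.south_of_B1

lemma Uses.east_of_B2 (h : S.Uses t .B2) : t.east = S.blackE := h.transpose.north_of_B1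

/-- The bottom row continues to the east of a `B₁` position with a `B₁` or a `C₁` position. -/
lemma Uses.exists_east_of_B1 (h : S.Uses t .B1) : ∃ v ∈ S.T.tiles, v.color = BWG.white ∧
    v.west = t.east ∧ (v.south = S.blackN ∨ v.south = S.satV) := by
  obtain ⟨x, hx, y, hy, hy1, i, hi1, hi, rfl⟩ := h.exists_B1
  refine ⟨S.tileIn x y (i + 1) 0, tileIn_mem hx hy (by omega) (by omega),
    tileIn_bottom_color hx hy hy1 (by omega) (Or.inr (by omega)),
    tileIn_west hx hy (by omega) (by omega) (Or.inr hi1), ?_⟩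
  rcases le_or_gt (i + 3) ℓ with hi' | hi'
  · exact Or.inl (tileIn_bottom_south_eq_blackN hx hy hy1 (by omega) (by omega))
  · rw [show i + 1 = ℓ - 1 by omega, tileIn_bottom_south hx hy hy1 (by omega),
      tileIn_corner_eq hx (by omega), cornerTile_north]
    exact Or.inr rfl

lemma Uses.south_of_C1 (h : S.Uses t .C1) : t.south = S.satV := by
  obtain ⟨x, hx, y, hy, hy1, rfl⟩ := h.exists_C1
  rw [tileIn_bottom_south hx hy hy1 (by omega), tileIn_corner_eq hx (by omega), cornerTile_north]

lemma Uses.north_of_C1 (h : S.Uses t .C1) : ∃ m < S.k, t.north = (S.gadgetCol m).south := by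
  obtain ⟨x, hx, y, hy, hy1, rfl⟩ := h.exists_C1
  obtain ⟨hc1, hck⟩ := S.P_mem x hx y hy
  refine ⟨S.k - S.P x y, by omega, ?_⟩
  rw [← tileIn_south hx hy (j := 0) (by omega) (by omega) (Or.inl hy1), tileIn_right_one hx hy]

lemma Uses.west_of_C2 (h : S.Uses t .C2) : t.west = S.satH := h.transpose.south_of_C1

lemma Uses.east_of_C2 (h : S.Uses t .C2) : ∃ m < S.k, t.east = (S.gadgetRow m).west :=
  h.transpose.north_of_C1

lemma Uses.eq_A (hA : S.Uses t .A) (hq : S.Uses t q) : q = .A := by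
  obtain ⟨u, hu, huc, huw, hus⟩ := hA.exists_north_of_A
  obtain ⟨v, hv, hvc, hvs, hvw⟩ := hA.exists_east_of_A
  have hu' : t.north ≠ S.blackN := fun h =>
    color_ne_white_of_inputs hu (Or.inl (hus.trans h)) (Or.inl huw) huc
  have hv' : t.east ≠ S.blackE := fun h =>
    color_ne_white_of_inputs hv (Or.inl hvs) (Or.inl (hvw.trans h)) hvc
  cases q with
  | A => rfl
  | B1 => exact absurd hq.north_of_B1 hu'
  | B2 => exact absurd hq.east_of_B2 hv'
  | C1 =>
    obtain ⟨m, hm, hN⟩ := hq.north_of_C1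
    exact absurd huc (color_ne_white_of_gadgetCol_south hu (by omega) (by omega) (hus.trans hN) huw)
  | C2 =>
    obtain ⟨m, hm, hE⟩ := hq.east_of_C2
    exact absurd hvc (S.transpose.color_ne_white_of_gadgetCol_south (u := v.transpose)
      (RTAS.mem_transpose_tiles.2 hv) (show m + 3 ≤ 5 * S.k + 8 by omega)
      (show m ≠ S.k by omega) (hvw.trans hE) hvs)
  | D1 => exact absurd (hq.eq_of_D1 ▸ gadgetCol_east (by omega)) hv'
  | D2 => exact absurd (hq.eq_of_D2 ▸ gadgetRow_north (by omega)) hu'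

lemma Uses.eq_B1 (ht : t ∈ S.T.tiles) (htw : t.color = BWG.white) (hB : S.Uses t .B1)
    (hq : S.Uses t q) : q = .B1 := by
  have hs := hB.south_of_B1
  cases q with
  | A => exact (hq.eq_A hB).symm
  | B1 => rfl
  | B2 => exact absurd htw (color_ne_white_of_inputs ht (Or.inl hs) (Or.inl hq.west_of_B2))
  | C1 => exact absurd (hq.south_of_C1.symm.trans hs) S.satV_ne_blackN
  | C2 => exact absurd htw (color_ne_white_of_inputs ht (Or.inl hs) (Or.inr hq.west_of_C2))
  | D1 => exact absurd htw (color_ne_white_of_inputs ht (Or.inl hs)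
      (Or.inl (hq.eq_of_D1 ▸ gadgetCol_west (by omega))))
  | D2 =>
    obtain ⟨v, hv, hvc, hvw, hvs⟩ := hB.exists_east_of_B1
    have : t.east = S.satH := hq.eq_of_D2 ▸ (gadgetRow_succ_west (by omega)).symm
    exact absurd hvc (color_ne_white_of_inputs hv hvs (Or.inr (hvw.trans this)))

lemma Uses.eq_C1 (ht : t ∈ S.T.tiles) (htw : t.color = BWG.white) (hC : S.Uses t .C1)
    (hq : S.Uses t q) : q = .C1 := by
  have hs := hC.south_of_C1
  cases q with
  | A => exact (hq.eq_A hC).symm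
  | B1 => exact (hq.eq_B1 ht htw hC).symm
  | B2 => exact absurd htw (color_ne_white_of_inputs ht (Or.inr hs) (Or.inl hq.west_of_B2))
  | C1 => rfl
  | C2 => exact absurd htw (color_ne_white_of_inputs ht (Or.inr hs) (Or.inr hq.west_of_C2))
  | D1 => exact absurd htw (color_ne_white_of_inputs ht (Or.inr hs)
      (Or.inl (hq.eq_of_D1 ▸ gadgetCol_west (by omega))))
  | D2 => exact (S.satV_ne_blackN (hs.symm.trans (hq.eq_of_D2 ▸ gadgetRow_south (by omega)))).elim

lemma Uses.eq_D2 (ht : t ∈ S.T.tiles) (htw : t.color = BWG.white) (hD : S.Uses t .D2)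
    (hq : S.Uses t q) : q = .D2 := by
  have hs : t.south = S.blackN := hD.eq_of_D2 ▸ gadgetRow_south (by omega)
  cases q with
  | A => exact (hq.eq_A hD).symm
  | B1 => exact (hq.eq_B1 ht htw hD).symm
  | C1 => exact (hq.eq_C1 ht htw hD).symm
  | B2 => exact absurd htw (color_ne_white_of_inputs ht (Or.inl hs) (Or.inl hq.west_of_B2))
  | C2 => exact absurd htw (color_ne_white_of_inputs ht (Or.inl hs) (Or.inr hq.west_of_C2))
  | D1 => exact absurd htw (color_ne_white_of_inputs ht (Or.inl hs)
      (Or.inl (hq.eq_of_D1 ▸ gadgetCol_west (by omega))))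
  | D2 => rfl

lemma Uses.eq_B2 (ht : t ∈ S.T.tiles) (htw : t.color = BWG.white) (hB : S.Uses t .B2)
    (hq : S.Uses t q) : q = .B2 := by
  have h := congrArg PosKind.swap
    (hB.transpose.eq_B1 (t := t.transpose) (RTAS.mem_transpose_tiles.2 ht) htw hq.transpose)
  rw [PosKind.swap_swap] at h
  exact h

lemma Uses.eq_C2 (ht : t ∈ S.T.tiles) (htw : t.color = BWG.white) (hC : S.Uses t .C2)
    (hq : S.Uses t q) : q = .C2 := by
  have h := congrArg PosKind.swap
    (hC.transpose.eq_C1 (t := t.transpose) (RTAS.mem_transpose_tiles.2 ht) htw hq.transpose)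
  rw [PosKind.swap_swap] at h
  exact h

lemma Uses.eq_D1 (ht : t ∈ S.T.tiles) (htw : t.color = BWG.white) (hD : S.Uses t .D1)
    (hq : S.Uses t q) : q = .D1 := by
  have h := congrArg PosKind.swap
    (hD.transpose.eq_D2 (t := t.transpose) (RTAS.mem_transpose_tiles.2 ht) htw hq.transpose)
  rw [PosKind.swap_swap] at h
  exact h

lemma Uses.kind_eq (ht : t ∈ S.T.tiles) (htw : t.color = BWG.white) (hp : S.Uses t p)
    (hq : S.Uses t q) : p = q := by
  cases p with
  | A => exact (hp.eq_A hq).symm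
  | B1 => exact (hp.eq_B1 ht htw hq).symm
  | B2 => exact (hp.eq_B2 ht htw hq).symm
  | C1 => exact (hp.eq_C1 ht htw hq).symm
  | C2 => exact (hp.eq_C2 ht htw hq).symm
  | D1 => exact (hp.eq_D1 ht htw hq).symm
  | D2 => exact (hp.eq_D2 ht htw hq).symm

end QAssembly

theorem white_positions_no_mixup_general {G : Type}
    (k w h : ℕ) (P : ℕ → ℕ → ℕ) (hI : InI k w h P)
    (Θ : RTAS BWG G) (hD : DirectedTAS Θ)
    (hb : countColor Θ BWG.black ≤ 1)
    (hg : countColor Θ BWG.gray ≤ 2 * k + 3)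
    (f : ℕ → ℕ → Tile BWG G)
    (hf : IsAssignment Θ (QW k w) (QH k h) f)
    (hcol : ∀ X < QW k w, ∀ Y < QH k h, (f X Y).color = QPat k w h P X Y) :
    ∀ t ∈ Θ.tiles, t.color = BWG.white →
      ∀ p q : PosKind, UsedAt k w h P f t p → UsedAt k w h P f t q → p = q := by
  let S : QAssembly G := ⟨k, w, h, P, Θ, f, hD, hb, hg, hf, hcol, hI.w_pos, hI.h_pos, hI.mem_Icc⟩
  intro t ht htw p q hp hq
  exact QAssembly.Uses.kind_eq (S := S) ht htw hp hq

/-- If a DTAS `Θ` self-assembles `Q` using at most `m_b = 1` black and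
`m_g = 2k + 3` gray tile types, then a white tile type of `Θ` which is used in one
of the positions `A`, `B₁`, `B₂`, `C₁`, `C₂`, `D₁`, `D₂` of some supertile cannot
be used in any other of these positions in any supertile. -/
theorem white_positions_no_mixup {G : Type} [DecidableEq G]
    (k w h : ℕ) (P : ℕ → ℕ → ℕ) (hI : InI k w h P)
    (Θ : RTAS BWG G) (hD : DirectedTAS Θ)
    (hb : countColor Θ BWG.black ≤ 1)
    (hg : countColor Θ BWG.gray ≤ 2 * k + 3)
    (f : ℕ → ℕ → Tile BWG G)
    (hf : IsAssignment Θ (QW k w) (QH k h) f)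
    (hcol : ∀ X < QW k w, ∀ Y < QH k h, (f X Y).color = QPat k w h P X Y) :
    ∀ t ∈ Θ.tiles, t.color = BWG.white →
      ∀ p q : PosKind, UsedAt k w h P f t p → UsedAt k w h P f t q → p = q :=
  white_positions_no_mixup_general k w h P hI Θ hD hb hg f hf hcol
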